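/- Performance difference lemma: for any two policies π and π̄ and any initial state s₀, V^π s₀ − V^{π̄} s₀ = (1/(1−γ)) · ∑_s d_{π,s₀} s · ∑_a π s a · A^{π̄} s a. -/
import Mathlib


open Finset

/-- `π` is a (stochastic) policy over a finite action set. -/
def IsPolicy {S A : Type*} [Fintype A] (π : S → A → ℝ) : Prop :=
  (∀ s a, 0 ≤ π s a) ∧ ∀ s, ∑ a, π s a = 1

/-- `P` is a transition kernel over a finite state set. -/
def IsKernel {S A : Type*} [Fintype S] (P : S → A → S → ℝ) : Prop :=
  (∀ s a s', 0 ≤ P s a s') ∧ ∀ s a, ∑ s', P s a s' = 1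

/-- `Q` satisfies the Bellman equation for policy `π` in the MDP `(P, r, γ)`. -/
def IsBellmanQ {S A : Type*} [Fintype S] [Fintype A]
    (P : S → A → S → ℝ) (r : S → A → ℝ) (γ : ℝ) (π : S → A → ℝ)
    (Q : S → A → ℝ) : Prop :=
  ∀ s a, Q s a = r s a + γ * ∑ s', P s a s' * ∑ a', π s' a' * Q s' a'

/-- `QH` satisfies the hyper Bellman equation for hyper-policy `ζ`,
with hyper reward `r_H s u = ∑ a, φ u s a * r s a` and hyper transition
`P_H s u s' = ∑ a, φ u s a * P s a s'`. -/
def IsHyperBellmanQ {S A : Type*} [Fintype S] [Fintype A] {M : ℕ}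
    (P : S → A → S → ℝ) (r : S → A → ℝ) (γ : ℝ)
    (φ : Fin M → S → A → ℝ) (ζ : S → Fin M → ℝ)
    (QH : S → Fin M → ℝ) : Prop :=
  ∀ s u, QH s u = (∑ a, φ u s a * r s a) +
    γ * ∑ s', (∑ a, φ u s a * P s a s') * (∑ u', ζ s' u' * QH s' u')

/- `d` is the normalized discounted state-visitation distribution of policy `π`
started from `s₀`. -/
open Classical in
def IsVisitation {S A : Type*} [Fintype S] [Fintype A]
    (P : S → A → S → ℝ) (γ : ℝ) (π : S → A → ℝ) (s₀ : S)
    (d : S → ℝ) : Prop :=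
  ∀ s', d s' = (1 - γ) * (if s' = s₀ then 1 else 0) +
    γ * ∑ s, d s * ∑ a, π s a * P s a s'

/-- performance difference lemma. -/
theorem performance_difference
    {S A : Type*} [Fintype S] [Fintype A] [Nonempty S] [Nonempty A]
    (P : S → A → S → ℝ) (r : S → A → ℝ) (γ : ℝ)
    (hP : IsKernel P) (hγ0 : 0 ≤ γ) (hγ1 : γ < 1)
    (π πb : S → A → ℝ) (hπ : IsPolicy π) (hπb : IsPolicy πb)
    (Q : S → A → ℝ) (hQ : IsBellmanQ P r γ π Q)
    (Qb : S → A → ℝ) (hQb : IsBellmanQ P r γ πb Qb)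
    (Ab : S → A → ℝ) (hAb : ∀ s a, Ab s a = Qb s a - ∑ a', πb s a' * Qb s a')
    (s₀ : S)
    (d : S → ℝ) (hd : IsVisitation P γ π s₀ d) :
    (∑ a, π s₀ a * Q s₀ a) - (∑ a, πb s₀ a * Qb s₀ a)
      = (1 / (1 - γ)) * ∑ s, d s * ∑ a, π s a * Ab s a := by
  classical
  obtain ⟨hπnn, hπsum⟩ := hπ
  obtain ⟨hπbnn, hπbsum⟩ := hπb
  have hne : (1:ℝ) - γ ≠ 0 := by linarith
  set V : S → ℝ := fun s => ∑ a, π s a * Q s a with hV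
  set Vb : S → ℝ := fun s => ∑ a, πb s a * Qb s a with hVb
  have hf : ∀ s, V s - Vb s = (∑ a, π s a * Ab s a)
      + γ * ∑ s', (∑ a, π s a * P s a s') * (V s' - Vb s') := by
    intro s
    have h1 : ∀ a, Q s a - Qb s a = γ * ∑ s', P s a s' * (V s' - Vb s') := by
      intro a
      rw [hQ s a, hQb s a]
      have e : ∑ s', P s a s' * (V s' - Vb s')
          = (∑ s', P s a s' * V s') - ∑ s', P s a s' * Vb s' := by
        rw [← Finset.sum_sub_distrib]
        exact Finset.sum_congr rfl fun s' _ => by ring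
      rw [e]; ring
    have e1 : ∑ a, π s a * Ab s a = (∑ a, π s a * Qb s a) - Vb s := by
      have : ∀ a, π s a * Ab s a = π s a * Qb s a - π s a * Vb s := by
        intro a; rw [hAb s a]; ring
      rw [Finset.sum_congr rfl fun a _ => this a, Finset.sum_sub_distrib,
        ← Finset.sum_mul, hπsum s, one_mul]
    have e2 : V s = (∑ a, π s a * Qb s a)
        + γ * ∑ s', (∑ a, π s a * P s a s') * (V s' - Vb s') := by
      have h2 : ∀ a, π s a * Q s a
          = π s a * Qb s a + γ * ∑ s', (π s a * P s a s') * (V s' - Vb s') := by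
        intro a
        have h1' := h1 a
        have h3 : Q s a = Qb s a + γ * ∑ s', P s a s' * (V s' - Vb s') := by
          linarith
        rw [h3, mul_add]
        congr 1
        rw [mul_left_comm, Finset.mul_sum]
        congr 1
        apply Finset.sum_congr rfl; intro s' _; ring
      rw [show V s = ∑ a, π s a * Q s a from rfl,
        Finset.sum_congr rfl fun a _ => h2 a, Finset.sum_add_distrib]
      congr 1
      rw [← Finset.mul_sum]
      congr 1
      rw [Finset.sum_comm]
      apply Finset.sum_congr rfl; intro s' _
      rw [Finset.sum_mul]
    rw [e2, e1]; ring
  have key : ∑ s, d s * (∑ a, π s a * Ab s a) = (1 - γ) * (V s₀ - Vb s₀) := by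
    have step : ∀ s, d s * (∑ a, π s a * Ab s a)
        = d s * (V s - Vb s)
          - γ * ∑ s', (d s * (∑ a, π s a * P s a s')) * (V s' - Vb s') := by
      intro s
      have hfs := hf s
      have h4 : (∑ a, π s a * Ab s a)
          = (V s - Vb s) - γ * ∑ s', (∑ a, π s a * P s a s') * (V s' - Vb s') := by
        linarith
      rw [h4, mul_sub]
      congr 1
      rw [mul_left_comm, Finset.mul_sum]
      congr 1
      apply Finset.sum_congr rfl; intro s' _; ring
    rw [Finset.sum_congr rfl fun s _ => step s, Finset.sum_sub_distrib]
    have swap : ∑ s, γ * ∑ s', (d s * (∑ a, π s a * P s a s')) * (V s' - Vb s')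
        = ∑ s', (γ * ∑ s, d s * ∑ a, π s a * P s a s') * (V s' - Vb s') := by
      rw [show (∀ s, γ * ∑ s', (d s * (∑ a, π s a * P s a s')) * (V s' - Vb s')
            = ∑ s', γ * ((d s * (∑ a, π s a * P s a s')) * (V s' - Vb s'))) →
          (∑ s, γ * ∑ s', (d s * (∑ a, π s a * P s a s')) * (V s' - Vb s')
            = ∑ s, ∑ s', γ * ((d s * (∑ a, π s a * P s a s')) * (V s' - Vb s')))
        from fun h => Finset.sum_congr rfl fun s _ => h s]
      · rw [Finset.sum_comm]
        apply Finset.sum_congr rfl; intro s' _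
        rw [Finset.mul_sum, Finset.sum_mul]
        apply Finset.sum_congr rfl; intro s _; ring
      · intro s; rw [Finset.mul_sum]
    rw [swap]
    have hd' : ∀ s', (γ * ∑ s, d s * ∑ a, π s a * P s a s') * (V s' - Vb s')
        = d s' * (V s' - Vb s')
          - (1 - γ) * ((if s' = s₀ then 1 else 0) * (V s' - Vb s')) := by
      intro s'
      have h := hd s'
      have : γ * ∑ s, d s * ∑ a, π s a * P s a s'
          = d s' - (1 - γ) * (if s' = s₀ then 1 else 0) := by linarith
      rw [this]; ring
    rw [Finset.sum_congr rfl fun s' _ => hd' s', Finset.sum_sub_distrib,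
      ← Finset.mul_sum]
    simp [ite_mul]
  have goal' : V s₀ - Vb s₀ = (1 / (1 - γ)) * ∑ s, d s * ∑ a, π s a * Ab s a := by
    rw [key]
    field_simp
  exact goal'
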